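/- arXiv:1504.02834 — 2 statements merged into one kernel-verified Lean document; each statement's English description precedes it below -/
import Mathlib

section
/- Let A be a normal subgroup of a finite group G such that G/A is a π-group, and let U be a π-Hall subgroup of A. Then there exists a π-Hall subgroup H of G with H ∩ A = U if and only if the G-conjugacy class of U equals the A-conjugacy class of U. -/
/-!
Both conditions are equivalent to the Frattini-type factorisation `G = A N_G(U)`.
If `H` is a `π`-Hall subgroup with `H ∩ A = U`, then `HA = G` because `|G : H|` and `|G : A|`
are coprime, and `H` normalises `H ∩ A = U`. Conversely, if `G = A N_G(U)`, then in
`N_G(U)/U` the normal subgroup `(A ∩ N_G(U))/U` is a `π'`-group of `π`-index, so by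
Schur–Zassenhaus it has a complement; its preimage `H` satisfies `H ∩ A = U` and `HA = G`,
which makes `|H| = |U| |G : A|` a `π`-number and `|G : H| = |A : U|` a `π'`-number.
-/

/-- The conjugate subgroup `g H g⁻¹`. -/
def conjSub {G : Type*} [Group G] (g : G) (H : Subgroup G) : Subgroup G :=
  H.map (MulAut.conj g).toMonoidHom

/-- `H` is pronormal in `G`: for every `g`, `H` and `H^g` are conjugate in `⟨H, H^g⟩`. -/
def IsPronormal {G : Type*} [Group G] (H : Subgroup G) : Prop :=
  ∀ g : G, ∃ x ∈ H ⊔ conjSub g H, conjSub x H = conjSub g H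

/-- `n` is a `π`-number: all its prime divisors lie in `π`. -/
def IsPiNumber (π : Set ℕ) (n : ℕ) : Prop :=
  ∀ p : ℕ, p.Prime → p ∣ n → p ∈ π

/-- `n` is a `π'`-number: none of its prime divisors lies in `π`. -/
def IsPiPrimeNumber (π : Set ℕ) (n : ℕ) : Prop :=
  ∀ p : ℕ, p.Prime → p ∣ n → p ∉ π

/-- `H` is a `π`-Hall subgroup: its order is a `π`-number and its index a `π'`-number. -/
def IsHall {G : Type*} [Group G] (π : Set ℕ) (H : Subgroup G) : Prop :=
  IsPiNumber π (Nat.card H) ∧ IsPiPrimeNumber π H.index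

/-- A group is `π`-separable if it has a normal series each of whose factors is a
`π`-group or a `π'`-group. -/
def IsPiSeparable (π : Set ℕ) (G : Type*) [Group G] : Prop :=
  ∃ n : ℕ, ∃ s : Fin (n + 1) → Subgroup G,
    Monotone s ∧ s 0 = ⊥ ∧ s (Fin.last n) = ⊤ ∧
    (∀ i, (s i).Normal) ∧
    ∀ i : Fin n,
      IsPiNumber π (Nat.card (s i.succ) / Nat.card (s i.castSucc)) ∨
      IsPiPrimeNumber π (Nat.card (s i.succ) / Nat.card (s i.castSucc))

/-- The `A`-conjugacy class `{H^a : a ∈ A}` of a subgroup `H`. -/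
def conjClassOn {G : Type*} [Group G] (A : Subgroup G) (H : Subgroup G) : Set (Subgroup G) :=
  {K | ∃ a ∈ A, K = conjSub a H}

/-- The `G`-conjugacy class `{H^g : g ∈ G}` of a subgroup `H`. -/
def conjClass {G : Type*} [Group G] (H : Subgroup G) : Set (Subgroup G) :=
  {K | ∃ g : G, K = conjSub g H}

open Subgroup

lemma IsPiNumber.mul {π : Set ℕ} {m n : ℕ} (hm : IsPiNumber π m) (hn : IsPiNumber π n) :
    IsPiNumber π (m * n) := fun p hp hpmn =>
  ((Nat.Prime.dvd_mul hp).mp hpmn).elim (hm p hp) (hn p hp)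

lemma IsPiNumber.coprime {π : Set ℕ} {m n : ℕ} (hm : IsPiNumber π m)
    (hn : IsPiPrimeNumber π n) : m.Coprime n :=
  Nat.coprime_of_dvd fun p hp hpm hpn => hn p hp hpn (hm p hp hpm)

section Conjugation

open scoped Pointwise

variable {G : Type*} [Group G]

lemma conjSub_one (H : Subgroup G) : conjSub 1 H = H := by
  ext x
  simp [conjSub]

lemma conjSub_mul (g h : G) (H : Subgroup G) :
    conjSub (g * h) H = conjSub g (conjSub h H) := by
  simp only [conjSub, map_map, map_mul]
  rfl

lemma conjSub_eq_self_iff {g : G} {H : Subgroup G} :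
    conjSub g H = H ↔ g ∈ normalizer (H : Set G) :=
  mem_normalizer_iff_map_conj_eq.symm

theorem conjClass_eq_conjClassOn_iff {A U : Subgroup G} [A.Normal] :
    conjClass U = conjClassOn A U ↔ A ⊔ normalizer (U : Set G) = ⊤ := by
  constructor
  · intro h
    refine eq_top_iff.mpr fun g _ => ?_
    obtain ⟨a, ha, hga⟩ : conjSub g U ∈ conjClassOn A U := h ▸ ⟨g, rfl⟩
    have hn : a⁻¹ * g ∈ normalizer (U : Set G) := by
      rw [← conjSub_eq_self_iff, conjSub_mul, hga, ← conjSub_mul, inv_mul_cancel, conjSub_one]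
    simpa using mul_mem_sup ha hn
  · intro h
    refine Set.Subset.antisymm ?_ fun K ⟨a, _, hK⟩ => ⟨a, hK⟩
    rintro K ⟨g, rfl⟩
    obtain ⟨a, ha, n, hn, rfl⟩ : g ∈ (A : Set G) * (normalizer (U : Set G) : Set G) := by
      rw [← normal_mul, h]
      trivial
    exact ⟨a, ha, by rw [conjSub_mul, conjSub_eq_self_iff.mpr hn]⟩

end Conjugation

namespace Subgroup

variable {G : Type*} [Group G]

theorem sup_eq_top_of_coprime_index {H K : Subgroup G} (h : H.index.Coprime K.index) :
    H ⊔ K = ⊤ :=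
  index_eq_one.mp <|
    Nat.eq_one_of_dvd_coprimes h (index_dvd_of_le le_sup_left) (index_dvd_of_le le_sup_right)

section Supplement

variable {H A : Subgroup G} [A.Normal]

theorem relIndex_inf_eq_index_of_sup_eq_top (h : H ⊔ A = ⊤) :
    (H ⊓ A).relIndex H = A.index := by
  rw [inf_relIndex_left, ← relIndex_sup_right, h, relIndex_top_right]

theorem card_eq_card_inf_mul_index_of_sup_eq_top (h : H ⊔ A = ⊤) :
    Nat.card H = Nat.card (H ⊓ A : Subgroup G) * A.index := by
  rw [← relIndex_inf_eq_index_of_sup_eq_top h, ← relIndex_bot_left, ← relIndex_bot_left,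
    relIndex_mul_relIndex _ _ _ bot_le inf_le_left]

theorem index_eq_relIndex_of_sup_eq_top [A.FiniteIndex] (h : H ⊔ A = ⊤) :
    H.index = H.relIndex A := by
  have key := relIndex_inf_mul_relIndex H A ⊤
  rw [inf_top_eq, relIndex_top_right, relIndex_top_right, ← relIndex_mul_index inf_le_left,
    relIndex_inf_eq_index_of_sup_eq_top h, mul_comm] at key
  exact (Nat.eq_of_mul_eq_mul_left (Nat.pos_of_ne_zero FiniteIndex.index_ne_zero) key).symm

theorem isHall_of_sup_eq_top [A.FiniteIndex] {π : Set ℕ} (h : H ⊔ A = ⊤)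
    (hA : IsPiNumber π A.index) (hHA : IsHall π ((H ⊓ A).subgroupOf A)) : IsHall π H := by
  have hcard : Nat.card ((H ⊓ A).subgroupOf A) = Nat.card (H ⊓ A : Subgroup G) :=
    Nat.card_congr (subgroupOfEquivOfLe inf_le_right).toEquiv
  refine ⟨?_, ?_⟩
  · rw [card_eq_card_inf_mul_index_of_sup_eq_top h, ← hcard]
    exact hHA.1.mul hA
  · rw [index_eq_relIndex_of_sup_eq_top h, ← inf_relIndex_right]
    exact hHA.2

end Supplement

/-- Schur–Zassenhaus for `S ⧸ U` in `G ⧸ U`, pulled back to `G`. -/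
theorem exists_inf_eq_and_sup_eq_top_of_coprime {U S : Subgroup G} [U.Normal]
    [hS : S.Normal] (hUS : U ≤ S) (hcop : (U.relIndex S).Coprime S.index) :
    ∃ H : Subgroup G, H ⊓ S = U ∧ H ⊔ S = ⊤ := by
  set φ := QuotientGroup.mk' U
  have hφ : Function.Surjective φ := QuotientGroup.mk'_surjective U
  have hker : φ.ker = U := QuotientGroup.ker_mk' U
  have : (S.map φ).Normal := hS.map φ hφ
  have hcard : Nat.card (S.map φ) = U.relIndex S := by rw [← relIndex_ker, hker]
  have hindex : (S.map φ).index = S.index := S.index_map_eq hφ (hker.le.trans hUS)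
  obtain ⟨K, hK⟩ := exists_right_complement'_of_coprime (N := S.map φ) (by rwa [hcard, hindex])
  refine ⟨K.comap φ, le_antisymm ?_ (le_inf (hker.ge.trans (ker_le_comap φ K)) hUS), ?_⟩
  · rintro x ⟨hxK, hxS⟩
    have : φ x ∈ S.map φ ⊓ K := ⟨mem_map_of_mem φ hxS, hxK⟩
    rwa [hK.disjoint.eq_bot, mem_bot, ← MonoidHom.mem_ker, hker] at this
  · rw [← comap_map_eq_self (hker.le.trans hUS), comap_sup_eq (f := φ) _ _ hφ, sup_comm,
      hK.sup_eq_top, comap_top]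

theorem exists_inf_eq_and_sup_eq_top_of_sup_normalizer_eq_top {U A : Subgroup G}
    [A.Normal] (hUA : U ≤ A) (hN : A ⊔ normalizer (U : Set G) = ⊤)
    (hcop : (U.relIndex A).Coprime A.index) :
    ∃ H : Subgroup G, H ⊓ A = U ∧ H ⊔ A = ⊤ := by
  set N := normalizer (U : Set G)
  have hUN : U ≤ N := le_normalizer
  have : (U.subgroupOf N).Normal := normal_in_normalizer
  have hdvd : U.relIndex (A ⊓ N) ∣ U.relIndex A :=
    Dvd.intro _ (relIndex_mul_relIndex U (A ⊓ N) A (le_inf hUA hUN) inf_le_left)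
  have hindex : (A.subgroupOf N).index = A.index := by
    rw [← relIndex, ← relIndex_sup_left, hN, relIndex_top_right]
  have hcop' : ((U.subgroupOf N).relIndex (A.subgroupOf N)).Coprime (A.subgroupOf N).index := by
    rw [← inf_subgroupOf_right A N, relIndex_subgroupOf inf_le_right, inf_subgroupOf_right]
    exact hindex ▸ hcop.coprime_dvd_left hdvd
  obtain ⟨H, hHA, hHtop⟩ := exists_inf_eq_and_sup_eq_top_of_coprime
    (U := U.subgroupOf N) (S := A.subgroupOf N) (fun x hx => hUA hx) hcop'
  refine ⟨H.map N.subtype, ?_, ?_⟩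
  · calc H.map N.subtype ⊓ A = H.map N.subtype ⊓ (A.subgroupOf N).map N.subtype := by
          rw [subgroupOf_map_subtype, inf_comm A N, ← inf_assoc,
            inf_of_le_left (map_subtype_le H)]
      _ = (H ⊓ A.subgroupOf N).map N.subtype := (map_inf _ _ _ N.subtype_injective).symm
      _ = U := by rw [hHA, subgroupOf_map_subtype, inf_of_le_left hUN]
  · have hNle : N ≤ H.map N.subtype ⊔ A :=
      calc N = (H ⊔ A.subgroupOf N).map N.subtype := by
            rw [hHtop, ← MonoidHom.range_eq_map, range_subtype]
        _ ≤ H.map N.subtype ⊔ A := by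
            rw [map_sup, subgroupOf_map_subtype]
            exact sup_le_sup_left inf_le_left _
    rw [eq_top_iff, ← hN]
    exact sup_le le_sup_right hNle

end Subgroup

theorem stmt_4 {G : Type*} [Group G] [Finite G] (π : Set ℕ) (A U : Subgroup G)
    (hA : A.Normal) (hquot : IsPiNumber π A.index)
    (hUA : U ≤ A) (hU : IsHall π (U.subgroupOf A)) :
    (∃ H : Subgroup G, IsHall π H ∧ H ⊓ A = U) ↔
      conjClass U = conjClassOn A U := by
  rw [conjClass_eq_conjClassOn_iff]
  constructor
  · rintro ⟨H, hH, rfl⟩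
    have hsup : A ⊔ H = ⊤ := sup_eq_top_of_coprime_index (hquot.coprime hH.2)
    have hHN : H ≤ normalizer ((H ⊓ A : Subgroup G) : Set G) := by
      rw [inf_comm]
      exact normal_subgroupOf_iff_le_normalizer_inf.mp inferInstance
    exact top_le_iff.mp (hsup ▸ sup_le_sup_left hHN A)
  · intro hN
    obtain ⟨H, hHA, hsup⟩ :=
      exists_inf_eq_and_sup_eq_top_of_sup_normalizer_eq_top hUA hN (hquot.coprime hU.2).symm
    exact ⟨H, isHall_of_sup_eq_top hsup hquot (hHA ▸ hU), hHA⟩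
end

section
/- Let H be a subgroup of a group G, let g ∈ G and y ∈ ⟨H, H^g⟩. If H^y and H^g are conjugate in ⟨H^y, H^g⟩, then H and H^g are conjugate in ⟨H, H^g⟩. -/
theorem conjSub_conjSub {G : Type*} [Group G] (a b : G) (H : Subgroup G) :
    conjSub a (conjSub b H) = conjSub (a * b) H := by
  rw [conjSub, conjSub, conjSub, Subgroup.map_map, map_mul]
  rfl

theorem conjSub_le_of_mem {G : Type*} [Group G] {H K : Subgroup G} {y : G} (hy : y ∈ K)
    (hH : H ≤ K) : conjSub y H ≤ K := by
  rintro _ ⟨w, hw, rfl⟩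
  exact mul_mem (mul_mem hy (hH hw)) (inv_mem hy)

theorem stmt_5 {G : Type*} [Group G] (H : Subgroup G) (g y : G)
    (hy : y ∈ H ⊔ conjSub g H)
    (h : ∃ z ∈ conjSub y H ⊔ conjSub g H, conjSub z (conjSub y H) = conjSub g H) :
    ∃ x ∈ H ⊔ conjSub g H, conjSub x H = conjSub g H := by
  obtain ⟨z, hz, hzy⟩ := h
  have hsup : conjSub y H ⊔ conjSub g H ≤ H ⊔ conjSub g H :=
    sup_le (conjSub_le_of_mem hy le_sup_left) le_sup_right
  exact ⟨z * y, mul_mem (hsup hz) hy, by rw [← conjSub_conjSub, hzy]⟩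
end
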